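/- Let a_* ∈ (5204/10000, 5244/10000) and t_* ∈ (3966/10000, 3991/10000) be as in the main theorem, and let (r, θ, α) be the solution of the system r' = cos α, θ' = sin α / sin r, α' = (2 cot(2θ)/sin r) cos α − 3 cot r sin α − 3 with r(0) = π/2, θ(0) = a_*, α(0) = π, satisfying α(t_*) = π/2 and θ(t_*) = π/4. Then the solution extends to a solution of the same system defined on all of [0, 4t_*], and the curve β : [0, 4t_*] → ℝ³ given by β(t) = (sin r(t) cos θ(t), sin r(t) sin θ(t), cos r(t)), which takes values in the unit sphere S² ⊂ ℝ³, satisfies β(0) = β(4t_*) and β'(0) = β'(4t_*); that is, β is a smooth closed curve in S². -/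

import Mathlib

/-!
The system is reversible in two ways: with `(r, θ, α)(t)` also `(r, π/2 - θ, π - α)(c - t)` and
`(π - r, θ, -α)(c - t)` are solutions; on `β` they act as the reflections in the planes `x = y` and
`z = 0`. The state `(r(t_*), π/4, π/2)` is fixed by the first one, so reflecting about `t_*`
extends the solution to `[0, 2t_*]`, ending at `(π/2, π/2 - a_*, 0)`. This is fixed by the second
one, so reflecting about `2t_*` extends it to `[0, 4t_*]`, ending at `(π/2, a_*, -π)`, which differs
from the initial state `(π/2, a_*, π)` only by `2π` in `α`; hence `β` and `β'` agree at both ends.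
The extension agrees with the given solution on `[0, 0.3991]` by uniqueness, the field being `C¹`
where `sin r · sin 2θ ≠ 0`.
-/

open Real Set

/-- The profile curve `β(t) = (sin r(t) cos θ(t), sin r(t) sin θ(t), cos r(t))`
associated to a solution of the CMC profile-curve ODE system. -/
noncomputable def profileCurve (r θ : ℝ → ℝ) : ℝ → EuclideanSpace ℝ (Fin 3) :=
  fun t => (WithLp.equiv 2 (Fin 3 → ℝ)).symm
    ![sin (r t) * cos (θ t), sin (r t) * sin (θ t), cos (r t)]

section AutonomousODE

variable {E : Type*} [NormedAddCommGroup E] [NormedSpace ℝ E] {v : E → E} {U : Set E}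
  {γ δ : ℝ → E} {s s' : Set ℝ} {a b c : ℝ}

def IsSolutionOn (v : E → E) (U : Set E) (γ : ℝ → E) (s : Set ℝ) : Prop :=
  IsIntegralCurveOn γ (fun _ ↦ v) s ∧ MapsTo γ s U

lemma IsSolutionOn.mono (hγ : IsSolutionOn v U γ s) (hs : s' ⊆ s) : IsSolutionOn v U γ s' :=
  ⟨hγ.1.mono hs, hγ.2.mono_left hs⟩

theorem IsSolutionOn.eqOn_Icc (hv : ContDiffOn ℝ 1 v U) (hU : IsOpen U)
    (hγ : IsSolutionOn v U γ (Icc a b)) (hδ : IsSolutionOn v U δ (Icc a b)) (ha : γ a = δ a) :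
    EqOn γ δ (Icc a b) := by
  have hK : IsCompact (γ '' Icc a b ∪ δ '' Icc a b) :=
    (isCompact_Icc.image_of_continuousOn hγ.1.continuousOn).union
      (isCompact_Icc.image_of_continuousOn hδ.1.continuousOn)
  have hvU : LocallyLipschitzOn U v := fun p hp ↦
    let ⟨K, t, ht, hLip⟩ := (hv.contDiffAt (hU.mem_nhds hp)).exists_lipschitzOnWith
    ⟨K, t, nhdsWithin_le_nhds ht, hLip⟩
  obtain ⟨K, hLip⟩ := (hvU.mono (union_subset hγ.2.image_subset hδ.2.image_subset)
    ).exists_lipschitzOnWith_of_compact hK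
  refine ODE_solution_unique_of_mem_Icc_right (fun _ _ ↦ hLip) hγ.1.continuousOn
    (fun t ht ↦ ?_) (fun t ht ↦ .inl ⟨t, Ico_subset_Icc_self ht, rfl⟩) hδ.1.continuousOn
    (fun t ht ↦ ?_) (fun t ht ↦ .inr ⟨t, Ico_subset_Icc_self ht, rfl⟩) ha
  · exact (hγ.1 t (Ico_subset_Icc_self ht)).mono_of_mem_nhdsWithin (Icc_mem_nhdsGE_of_mem ht)
  · exact (hδ.1 t (Ico_subset_Icc_self ht)).mono_of_mem_nhdsWithin (Icc_mem_nhdsGE_of_mem ht)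

theorem IsSolutionOn.reflect (L : E →L[ℝ] E) (e : E) (hv : ∀ p, v (L p + e) = -L (v p))
    (hU : MapsTo (fun p ↦ L p + e) U U) (hγ : IsSolutionOn v U γ (Icc a b)) (c : ℝ) :
    IsSolutionOn v U (fun t ↦ L (γ (c - t)) + e) (Icc (c - b) (c - a)) := by
  have hmaps : MapsTo (c - ·) (Icc (c - b) (c - a)) (Icc a b) :=
    fun s hs ↦ ⟨by linarith [hs.2], by linarith [hs.1]⟩
  refine ⟨fun t ht ↦ ?_, hU.comp (hγ.2.comp hmaps)⟩
  have hrev : HasDerivWithinAt (fun s ↦ γ (c - s)) (-v (γ (c - t))) (Icc (c - b) (c - a)) t :=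
    ((hγ.1 (c - t) (hmaps ht)).scomp t ((hasDerivAt_id t).const_sub c).hasDerivWithinAt
      hmaps).congr_deriv (by simp)
  simpa [hv] using (L.hasFDerivAt.comp_hasDerivWithinAt t hrev).add_const e

theorem IsSolutionOn.piecewise_Iic (hγ : IsSolutionOn v U γ (Icc a b))
    (hδ : IsSolutionOn v U δ (Icc b c)) (hab : a ≤ b) (hbc : b ≤ c) (hb : γ b = δ b) :
    IsSolutionOn v U (fun t ↦ if t ≤ b then γ t else δ t) (Icc a c) := by
  set z : ℝ → E := fun t ↦ if t ≤ b then γ t else δ t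
  have hzγ : EqOn z γ (Icc a b) := fun t ht ↦ if_pos ht.2
  have hzδ : EqOn z δ (Icc b c) := fun t ht ↦ by
    rcases ht.1.eq_or_lt with rfl | h
    · exact (if_pos le_rfl).trans hb
    · exact if_neg h.not_ge
  have hderiv : ∀ {s : Set ℝ} {η : ℝ → E}, IsClosed s → IsIntegralCurveOn η (fun _ ↦ v) s →
      EqOn z η s → ∀ t, HasDerivWithinAt z (v (z t)) s t := fun {s η} hs hη hzη t ↦ by
    by_cases ht : t ∈ s
    · rw [hzη ht]; exact (hη t ht).congr hzη (hzη ht)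
    · exact HasFDerivWithinAt.of_notMem_closure (by rwa [hs.closure_eq])
  rw [← Icc_union_Icc_eq_Icc hab hbc]
  refine ⟨fun t _ ↦ (hderiv isClosed_Icc hγ.1 hzγ t).union (hderiv isClosed_Icc hδ.1 hzδ t), ?_⟩
  rintro t (ht | ht)
  · rw [hzγ ht]; exact hγ.2 ht
  · rw [hzδ ht]; exact hδ.2 ht

theorem IsSolutionOn.extend_reflect (L : E →L[ℝ] E) (e : E) (hv : ∀ p, v (L p + e) = -L (v p))
    (hU : MapsTo (fun p ↦ L p + e) U U) (hγ : IsSolutionOn v U γ (Icc a b)) (hab : a ≤ b)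
    (hb : L (γ b) + e = γ b) :
    IsSolutionOn v U (fun t ↦ if t ≤ b then γ t else L (γ (2 * b - t)) + e) (Icc a (2 * b - a)) :=
  hγ.piecewise_Iic ((hγ.reflect L e hv hU (2 * b)).mono (Icc_subset_Icc (by linarith) le_rfl))
    hab (by linarith) (by rw [two_mul, add_sub_cancel_right, hb])

end AutonomousODE

noncomputable def profileField (p : ℝ × ℝ × ℝ) : ℝ × ℝ × ℝ :=
  (cos p.2.2, sin p.2.2 / sin p.1,
    2 * (cos (2 * p.2.1) / sin (2 * p.2.1)) / sin p.1 * cos p.2.2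
      - 3 * (cos p.1 / sin p.1) * sin p.2.2 - 3)

def profileDomain : Set (ℝ × ℝ × ℝ) := {p | sin p.1 ≠ 0 ∧ sin (2 * p.2.1) ≠ 0}

lemma isOpen_profileDomain : IsOpen profileDomain :=
  (isOpen_ne_fun (by fun_prop) continuous_const).inter
    (isOpen_ne_fun (by fun_prop) continuous_const)

lemma contDiffOn_profileField : ContDiffOn ℝ 1 profileField profileDomain := by
  rintro p ⟨h₁, h₂⟩
  refine ContDiffAt.contDiffWithinAt ?_
  unfold profileField
  fun_prop (disch := assumption)

lemma isSolutionOn_profileField_iff {r θ α : ℝ → ℝ} {s : Set ℝ} :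
    IsSolutionOn profileField profileDomain (fun t ↦ (r t, θ t, α t)) s ↔
      ∀ t ∈ s, sin (r t) ≠ 0 ∧ sin (2 * θ t) ≠ 0 ∧
        HasDerivWithinAt r (cos (α t)) s t ∧
        HasDerivWithinAt θ (sin (α t) / sin (r t)) s t ∧
        HasDerivWithinAt α
          (2 * (cos (2 * θ t) / sin (2 * θ t)) / sin (r t) * cos (α t)
            - 3 * (cos (r t) / sin (r t)) * sin (α t) - 3) s t := by
  constructor
  · rintro ⟨hx, hU⟩ t ht
    have h := hx t ht
    refine ⟨(hU ht).1, (hU ht).2, ?_, ?_, ?_⟩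
    · exact hasFDerivAt_fst.comp_hasDerivWithinAt (f := fun t ↦ (r t, θ t, α t)) t h
    · exact (hasFDerivAt_fst.comp _ hasFDerivAt_snd).comp_hasDerivWithinAt
        (f := fun t ↦ (r t, θ t, α t)) t h
    · exact (hasFDerivAt_snd.comp _ hasFDerivAt_snd).comp_hasDerivWithinAt
        (f := fun t ↦ (r t, θ t, α t)) t h
  · intro h
    exact ⟨fun t ht ↦ (h t ht).2.2.1.prodMk ((h t ht).2.2.2.1.prodMk (h t ht).2.2.2.2),
      fun t ht ↦ ⟨(h t ht).1, (h t ht).2.1⟩⟩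

noncomputable def diagonalReflection : (ℝ × ℝ × ℝ) →L[ℝ] ℝ × ℝ × ℝ :=
  (ContinuousLinearMap.id ℝ ℝ).prodMap (-ContinuousLinearMap.id ℝ (ℝ × ℝ))

noncomputable def equatorialReflection : (ℝ × ℝ × ℝ) →L[ℝ] ℝ × ℝ × ℝ :=
  (-ContinuousLinearMap.id ℝ ℝ).prodMap
    ((ContinuousLinearMap.id ℝ ℝ).prodMap (-ContinuousLinearMap.id ℝ ℝ))

lemma diagonalReflection_apply (p : ℝ × ℝ × ℝ) :
    diagonalReflection p = (p.1, -p.2.1, -p.2.2) := rfl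

lemma equatorialReflection_apply (p : ℝ × ℝ × ℝ) :
    equatorialReflection p = (-p.1, p.2.1, -p.2.2) := rfl

lemma diagonalReflection_add (p : ℝ × ℝ × ℝ) :
    diagonalReflection p + (0, π / 2, π) = (p.1, π / 2 - p.2.1, π - p.2.2) := by
  rw [diagonalReflection_apply, Prod.mk_add_mk, Prod.mk_add_mk]
  ring_nf

lemma equatorialReflection_add (p : ℝ × ℝ × ℝ) :
    equatorialReflection p + (π, 0, 0) = (π - p.1, p.2.1, -p.2.2) := by
  rw [equatorialReflection_apply, Prod.mk_add_mk, Prod.mk_add_mk]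
  ring_nf

lemma profileField_diagonalReflection (p : ℝ × ℝ × ℝ) :
    profileField (diagonalReflection p + (0, π / 2, π)) =
      -diagonalReflection (profileField p) := by
  rw [diagonalReflection_add, diagonalReflection_apply]
  simp only [profileField, Prod.neg_mk, neg_neg, show 2 * (π / 2 - p.2.1) = π - 2 * p.2.1 by ring,
    cos_pi_sub, sin_pi_sub]
  ring_nf

lemma profileField_equatorialReflection (p : ℝ × ℝ × ℝ) :
    profileField (equatorialReflection p + (π, 0, 0)) =
      -equatorialReflection (profileField p) := by
  rw [equatorialReflection_add, equatorialReflection_apply]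
  simp only [profileField, Prod.neg_mk, neg_neg, cos_pi_sub, sin_pi_sub, cos_neg, sin_neg]
  ring_nf

lemma mapsTo_diagonalReflection :
    MapsTo (fun p ↦ diagonalReflection p + (0, π / 2, π)) profileDomain profileDomain := by
  intro p hp
  simpa only [diagonalReflection_add, profileDomain, mem_ofPred_eq,
    show 2 * (π / 2 - p.2.1) = π - 2 * p.2.1 by ring, sin_pi_sub] using hp

lemma mapsTo_equatorialReflection :
    MapsTo (fun p ↦ equatorialReflection p + (π, 0, 0)) profileDomain profileDomain := by
  intro p hp
  simpa only [equatorialReflection_add, profileDomain, mem_ofPred_eq, sin_pi_sub] using hp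

lemma profileCurve_mem_sphere (r θ : ℝ → ℝ) (t : ℝ) :
    profileCurve r θ t ∈ Metric.sphere (0 : EuclideanSpace ℝ (Fin 3)) 1 := by
  rw [mem_sphere_zero_iff_norm, EuclideanSpace.norm_eq, Real.sqrt_eq_one]
  simp only [profileCurve, WithLp.equiv_symm_apply, norm_eq_abs, sq_abs, Fin.sum_univ_three,
    Matrix.cons_val_zero, Matrix.cons_val_one, Matrix.cons_val]
  nlinarith [sin_sq_add_cos_sq (r t), sin_sq_add_cos_sq (θ t)]

lemma hasDerivWithinAt_profileCurve {r θ : ℝ → ℝ} {r' θ' t : ℝ} {s : Set ℝ}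
    (hr : HasDerivWithinAt r r' s t) (hθ : HasDerivWithinAt θ θ' s t) :
    HasDerivWithinAt (profileCurve r θ) ((WithLp.equiv 2 (Fin 3 → ℝ)).symm
      ![cos (r t) * r' * cos (θ t) + sin (r t) * (-sin (θ t) * θ'),
        cos (r t) * r' * sin (θ t) + sin (r t) * (cos (θ t) * θ'), -sin (r t) * r']) s t := by
  have h : HasDerivWithinAt (fun t ↦ ![sin (r t) * cos (θ t), sin (r t) * sin (θ t), cos (r t)])
      ![cos (r t) * r' * cos (θ t) + sin (r t) * (-sin (θ t) * θ'),
        cos (r t) * r' * sin (θ t) + sin (r t) * (cos (θ t) * θ'), -sin (r t) * r'] s t := by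
    rw [hasDerivWithinAt_pi]
    intro i
    fin_cases i
    exacts [hr.sin.mul hθ.cos, hr.sin.mul hθ.sin, hr.cos]
  exact (EuclideanSpace.equiv (Fin 3) ℝ).symm.hasFDerivAt.comp_hasDerivWithinAt t h

/-- `β'` at a time where `(r, θ, α) = p`, by the chain rule and the first two equations. -/
noncomputable def profileVelocity (p : ℝ × ℝ × ℝ) : EuclideanSpace ℝ (Fin 3) :=
  (WithLp.equiv 2 (Fin 3 → ℝ)).symm
    ![cos p.1 * cos p.2.2 * cos p.2.1 + sin p.1 * (-sin p.2.1 * (sin p.2.2 / sin p.1)),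
      cos p.1 * cos p.2.2 * sin p.2.1 + sin p.1 * (cos p.2.1 * (sin p.2.2 / sin p.1)),
      -sin p.1 * cos p.2.2]

lemma IsSolutionOn.hasDerivWithinAt_profileCurve {w : ℝ → ℝ × ℝ × ℝ} {s : Set ℝ} {t : ℝ}
    (hw : IsSolutionOn profileField profileDomain w s) (ht : t ∈ s) :
    HasDerivWithinAt (profileCurve (fun t ↦ (w t).1) (fun t ↦ (w t).2.1))
      (profileVelocity (w t)) s t := by
  obtain ⟨-, -, hr, hθ, -⟩ := (isSolutionOn_profileField_iff (r := fun t ↦ (w t).1)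
    (θ := fun t ↦ (w t).2.1) (α := fun t ↦ (w t).2.2)).1 hw t ht
  exact _root_.hasDerivWithinAt_profileCurve hr hθ

theorem IsSolutionOn.exists_profileField_extension {x : ℝ → ℝ × ℝ × ℝ} {T θ₀ : ℝ} (hT : 0 < T)
    (hx : IsSolutionOn profileField profileDomain x (Icc 0 T)) (hx0 : x 0 = (π / 2, θ₀, π))
    (hθT : (x T).2.1 = π / 4) (hαT : (x T).2.2 = π / 2) :
    ∃ w, IsSolutionOn profileField profileDomain w (Icc 0 (4 * T)) ∧
      w 0 = (π / 2, θ₀, π) ∧ w (4 * T) = (π / 2, θ₀, -π) := by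
  have hfix₁ : diagonalReflection (x T) + (0, π / 2, π) = x T := by
    rw [diagonalReflection_add]
    exact Prod.ext rfl (Prod.ext (by dsimp only; linarith) (by dsimp only; linarith))
  set z := fun t ↦ if t ≤ T then x t else diagonalReflection (x (2 * T - t)) + (0, π / 2, π)
  have hz : IsSolutionOn profileField profileDomain z (Icc 0 (2 * T)) := by
    simpa using hx.extend_reflect _ _ profileField_diagonalReflection mapsTo_diagonalReflection
      hT.le hfix₁
  have hz0 : z 0 = x 0 := if_pos hT.le
  have hfix₂ : equatorialReflection (z (2 * T)) + (π, 0, 0) = z (2 * T) := by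
    simp only [z, show ¬ 2 * T ≤ T by linarith, if_false, sub_self, hx0, diagonalReflection_add,
      equatorialReflection_add]
    ring_nf
  refine ⟨fun t ↦ if t ≤ 2 * T then z t else equatorialReflection (z (2 * (2 * T) - t)) + (π, 0, 0),
    (hz.extend_reflect _ _ profileField_equatorialReflection mapsTo_equatorialReflection
      (by linarith) hfix₂).mono (Icc_subset_Icc le_rfl (by linarith)), ?_, ?_⟩
  · exact (if_pos (by linarith)).trans (hz0.trans hx0)
  · beta_reduce
    rw [if_neg (by linarith), show 2 * (2 * T) - 4 * T = 0 by ring, hz0, hx0,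
      equatorialReflection_add]
    ring_nf

theorem profile_curve_closed_general (t_ : ℝ)
    (ht : t_ ∈ Ioo (3966 / 10000 : ℝ) (3991 / 10000))
    (r θ α : ℝ → ℝ)
    (hsys : ∀ t ∈ Icc (0 : ℝ) (3991 / 10000),
      Real.sin (r t) ≠ 0 ∧ Real.sin (2 * θ t) ≠ 0 ∧
      HasDerivWithinAt r (Real.cos (α t)) (Icc (0 : ℝ) (3991 / 10000)) t ∧
      HasDerivWithinAt θ (Real.sin (α t) / Real.sin (r t))
        (Icc (0 : ℝ) (3991 / 10000)) t ∧
      HasDerivWithinAt α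
        (2 * (Real.cos (2 * θ t) / Real.sin (2 * θ t)) / Real.sin (r t) * Real.cos (α t)
          - 3 * (Real.cos (r t) / Real.sin (r t)) * Real.sin (α t) - 3)
        (Icc (0 : ℝ) (3991 / 10000)) t)
    (hr0 : r 0 = π / 2) (hα0 : α 0 = π)
    (hαt : α t_ = π / 2) (hθt : θ t_ = π / 4) :
    ∃ R Θ A : ℝ → ℝ,
      (∀ t ∈ Icc (0 : ℝ) (3991 / 10000), R t = r t ∧ Θ t = θ t ∧ A t = α t) ∧
      (∀ t ∈ Icc (0 : ℝ) (4 * t_),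
        Real.sin (R t) ≠ 0 ∧ Real.sin (2 * Θ t) ≠ 0 ∧
        HasDerivWithinAt R (Real.cos (A t)) (Icc (0 : ℝ) (4 * t_)) t ∧
        HasDerivWithinAt Θ (Real.sin (A t) / Real.sin (R t))
          (Icc (0 : ℝ) (4 * t_)) t ∧
        HasDerivWithinAt A
          (2 * (Real.cos (2 * Θ t) / Real.sin (2 * Θ t)) / Real.sin (R t) * Real.cos (A t)
            - 3 * (Real.cos (R t) / Real.sin (R t)) * Real.sin (A t) - 3)
          (Icc (0 : ℝ) (4 * t_)) t) ∧
      (∀ t ∈ Icc (0 : ℝ) (4 * t_),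
        profileCurve R Θ t ∈ Metric.sphere (0 : EuclideanSpace ℝ (Fin 3)) 1) ∧
      profileCurve R Θ 0 = profileCurve R Θ (4 * t_) ∧
      ∃ v : EuclideanSpace ℝ (Fin 3),
        HasDerivWithinAt (profileCurve R Θ) v (Icc (0 : ℝ) (4 * t_)) 0 ∧
        HasDerivWithinAt (profileCurve R Θ) v (Icc (0 : ℝ) (4 * t_)) (4 * t_) := by
  obtain ⟨hT₁, hT₂⟩ := ht
  set x : ℝ → ℝ × ℝ × ℝ := fun t ↦ (r t, θ t, α t)
  have hx : IsSolutionOn profileField profileDomain x (Icc 0 (3991 / 10000)) :=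
    isSolutionOn_profileField_iff.2 hsys
  have hx0 : x 0 = (π / 2, θ 0, π) := by simp [x, hr0, hα0]
  obtain ⟨w, hw, hw0, hw4⟩ := (hx.mono (Icc_subset_Icc le_rfl hT₂.le)).exists_profileField_extension
    (by linarith) hx0 hθt hαt
  have hwx : EqOn w x (Icc 0 (3991 / 10000)) :=
    (hw.mono (Icc_subset_Icc le_rfl (by linarith))).eqOn_Icc contDiffOn_profileField
      isOpen_profileDomain hx (hw0.trans hx0.symm)
  refine ⟨fun t ↦ (w t).1, fun t ↦ (w t).2.1, fun t ↦ (w t).2.2, fun t ht ↦ by simp [hwx ht, x],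
    isSolutionOn_profileField_iff.1 hw, fun t _ ↦ profileCurve_mem_sphere _ _ t,
    by simp [profileCurve, hw0, hw4], profileVelocity (w 0),
    hw.hasDerivWithinAt_profileCurve ⟨le_rfl, by linarith⟩, ?_⟩
  simpa [hw0, hw4, profileVelocity] using hw.hasDerivWithinAt_profileCurve ⟨by linarith, le_rfl⟩

/-- The solution of the main theorem extends to a solution on `[0, 4t_*]`, and
the associated profile curve `β` is a closed curve on the unit sphere `S²`:
`β(0) = β(4t_*)` and `β'(0) = β'(4t_*)`. -/
theorem profile_curve_closed (a t_ : ℝ)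
    (ha : a ∈ Ioo (5204 / 10000 : ℝ) (5244 / 10000))
    (ht : t_ ∈ Ioo (3966 / 10000 : ℝ) (3991 / 10000))
    (r θ α : ℝ → ℝ)
    (hsys : ∀ t ∈ Icc (0 : ℝ) (3991 / 10000),
      Real.sin (r t) ≠ 0 ∧ Real.sin (2 * θ t) ≠ 0 ∧
      HasDerivWithinAt r (Real.cos (α t)) (Icc (0 : ℝ) (3991 / 10000)) t ∧
      HasDerivWithinAt θ (Real.sin (α t) / Real.sin (r t))
        (Icc (0 : ℝ) (3991 / 10000)) t ∧
      HasDerivWithinAt α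
        (2 * (Real.cos (2 * θ t) / Real.sin (2 * θ t)) / Real.sin (r t) * Real.cos (α t)
          - 3 * (Real.cos (r t) / Real.sin (r t)) * Real.sin (α t) - 3)
        (Icc (0 : ℝ) (3991 / 10000)) t)
    (hr0 : r 0 = π / 2) (hθ0 : θ 0 = a) (hα0 : α 0 = π)
    (hαt : α t_ = π / 2) (hθt : θ t_ = π / 4) :
    ∃ R Θ A : ℝ → ℝ,
      (∀ t ∈ Icc (0 : ℝ) (3991 / 10000), R t = r t ∧ Θ t = θ t ∧ A t = α t) ∧
      (∀ t ∈ Icc (0 : ℝ) (4 * t_),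
        Real.sin (R t) ≠ 0 ∧ Real.sin (2 * Θ t) ≠ 0 ∧
        HasDerivWithinAt R (Real.cos (A t)) (Icc (0 : ℝ) (4 * t_)) t ∧
        HasDerivWithinAt Θ (Real.sin (A t) / Real.sin (R t))
          (Icc (0 : ℝ) (4 * t_)) t ∧
        HasDerivWithinAt A
          (2 * (Real.cos (2 * Θ t) / Real.sin (2 * Θ t)) / Real.sin (R t) * Real.cos (A t)
            - 3 * (Real.cos (R t) / Real.sin (R t)) * Real.sin (A t) - 3)
          (Icc (0 : ℝ) (4 * t_)) t) ∧
      (∀ t ∈ Icc (0 : ℝ) (4 * t_),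
        profileCurve R Θ t ∈ Metric.sphere (0 : EuclideanSpace ℝ (Fin 3)) 1) ∧
      profileCurve R Θ 0 = profileCurve R Θ (4 * t_) ∧
      ∃ v : EuclideanSpace ℝ (Fin 3),
        HasDerivWithinAt (profileCurve R Θ) v (Icc (0 : ℝ) (4 * t_)) 0 ∧
        HasDerivWithinAt (profileCurve R Θ) v (Icc (0 : ℝ) (4 * t_)) (4 * t_) :=
  profile_curve_closed_general t_ ht r θ α hsys hr0 hα0 hαt hθt
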